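/- arXiv:1906.11497 — 3 statements merged into one kernel-verified Lean document; each statement's English description precedes it below -/
import Mathlib

section
/- Let G be a graph, B an independent set of G, and v ∈ B. If for every neighbor x of v the intersection B ∩ N(x) is not equal to {v}, then G is not a W₂ graph. -/
open SimpleGraph

/-- The circulant graph `C_n(S)` on `ℤ/nℤ`: vertices `i, j` are adjacent iff
`min{|i−j|, n−|i−j|} ∈ S`, i.e. iff `i − j` or `j − i` is congruent mod `n`
to an element of `S ⊆ {1, …, ⌊n/2⌋}`. -/
def circ (n : ℕ) (S : Set ℕ) : SimpleGraph (ZMod n) :=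
  SimpleGraph.circulantGraph ((fun s : ℕ => (s : ZMod n)) '' S)

/-- `s` is an independent set of `G`. -/
def IsIndep {V : Type*} (G : SimpleGraph V) (s : Finset V) : Prop :=
  ∀ ⦃u⦄, u ∈ s → ∀ ⦃w⦄, w ∈ s → ¬ G.Adj u w

/-- The independence number `α(G)`. -/
noncomputable def indepNum {V : Type*} [Fintype V] (G : SimpleGraph V) : ℕ :=
  sSup {k | ∃ s : Finset V, IsIndep G s ∧ s.card = k}

/-- `G` is a W₂ graph: it has at least two vertices and every pair of disjoint
independent sets is contained in a pair of disjoint maximum independent sets. -/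
def IsW2 {V : Type*} [Fintype V] (G : SimpleGraph V) : Prop :=
  2 ≤ Fintype.card V ∧
  ∀ A B : Finset V, IsIndep G A → IsIndep G B → Disjoint A B →
    ∃ A' B' : Finset V, A ⊆ A' ∧ B ⊆ B' ∧ Disjoint A' B' ∧
      IsIndep G A' ∧ IsIndep G B' ∧ A'.card = _root_.indepNum G ∧ B'.card = _root_.indepNum G

/-- The disjoint union of `d` copies of the graph `G`. -/
def copies {V : Type*} (d : ℕ) (G : SimpleGraph V) : SimpleGraph (Fin d × V) where
  Adj p q := p.1 = q.1 ∧ G.Adj p.2 q.2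
  symm := ⟨fun p q h => ⟨h.1.symm, h.2.symm⟩⟩
  loopless := ⟨fun p h => G.loopless.irrefl _ h.2⟩

/-!
Apply the W₂ property to the disjoint independent sets `{v}` and `B \ {v}`: this gives a maximum
independent set `B' ⊇ B \ {v}` avoiding `v`. Every neighbour `x` of `v` is adjacent to some
`y ∈ B \ {v} ⊆ B'`, so `x ∉ B'`. Hence `B' ∪ {v}` is an independent set larger than `α(G)`.
-/

namespace IsIndep

variable {V : Type*} {G : SimpleGraph V}

theorem singleton (v : V) : IsIndep G {v} := by
  intro u hu w hw
  rw [Finset.mem_singleton] at hu hw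
  subst hu hw
  exact G.irrefl

theorem mono {s t : Finset V} (hs : IsIndep G s) (hts : t ⊆ s) : IsIndep G t :=
  fun _ hu _ hw => hs (hts hu) (hts hw)

theorem insert [DecidableEq V] {s : Finset V} {v : V} (hs : IsIndep G s)
    (hv : ∀ x ∈ s, ¬ G.Adj v x) : IsIndep G (insert v s) := by
  intro u hu w hw hadj
  rcases Finset.mem_insert.mp hu with rfl | hus
  · rcases Finset.mem_insert.mp hw with rfl | hws
    · exact G.irrefl hadj
    · exact hv w hws hadj
  · rcases Finset.mem_insert.mp hw with rfl | hws
    · exact hv u hus hadj.symm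
    · exact hs hus hws hadj

theorem card_le_indepNum [Fintype V] {s : Finset V} (hs : IsIndep G s) :
    s.card ≤ _root_.indepNum G := by
  refine le_csSup ⟨Fintype.card V, ?_⟩ ⟨s, hs, rfl⟩
  rintro k ⟨t, -, rfl⟩
  exact t.card_le_univ

end IsIndep

theorem exists_adj_ne_of_inter_neighborSet_ne_singleton {V : Type*} {G : SimpleGraph V}
    {B : Set V} {v x : V} (hv : v ∈ B) (hvx : G.Adj v x) (h : B ∩ G.neighborSet x ≠ {v}) :
    ∃ y ∈ B, y ≠ v ∧ G.Adj x y := by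
  by_contra! hc
  refine h (Set.eq_singleton_iff_unique_mem.mpr ⟨⟨hv, hvx.symm⟩, fun y ⟨hyB, hxy⟩ => ?_⟩)
  by_contra hyv
  exact hc y hyB hyv hxy

theorem stmt_0 {V : Type*} [Fintype V] (G : SimpleGraph V) (B : Finset V)
    (hB : IsIndep G B) (v : V) (hv : v ∈ B)
    (h : ∀ x : V, G.Adj v x → (↑B : Set V) ∩ G.neighborSet x ≠ {v}) :
    ¬ IsW2 G := by
  classical
  rintro ⟨-, hW⟩
  obtain ⟨A', B', hvA', hB'sup, hdisj, -, hB'ind, -, hB'card⟩ :=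
    hW {v} (B.erase v) (IsIndep.singleton v) (hB.mono (B.erase_subset v))
      (Finset.disjoint_singleton_left.mpr (B.notMem_erase v))
  have hvB' : v ∉ B' := Finset.disjoint_left.mp hdisj (Finset.singleton_subset_iff.mp hvA')
  have hv_nonadj : ∀ x ∈ B', ¬ G.Adj v x := fun x hx hvx => by
    obtain ⟨y, hyB, hyv, hxy⟩ := exists_adj_ne_of_inter_neighborSet_ne_singleton hv hvx (h x hvx)
    exact hB'ind hx (hB'sup (Finset.mem_erase.mpr ⟨hyv, hyB⟩)) hxy
  have hcard := (hB'ind.insert hv_nonadj).card_le_indepNum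
  rw [Finset.card_insert_of_notMem hvB', hB'card] at hcard
  omega
end

section
/- If n = a + 2b with 1 ≤ a < b < n/2 and gcd(n,a,b) = 1, then C_n(a,b) is isomorphic to C_n(1,2). -/
open SimpleGraph

/-!
Since `n = a + 2b`, any common divisor of `n` and `b` divides `a`, so `b` is a unit of `ℤ/nℤ`.
Multiplication by `b⁻¹` is then a group automorphism of `ℤ/nℤ`, hence an isomorphism of
circulant graphs; it sends the jumps `a ≡ -2b` and `b` to `-2` and `1`, and a jump and its
negative give the same circulant graph.
-/

namespace SimpleGraph

variable {G H : Type*} [AddGroup G] [AddGroup H]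

def Iso.circulantGraphOfAddEquiv (φ : G ≃+ H) (s : Set G) :
    circulantGraph s ≃g circulantGraph (φ '' s) where
  toEquiv := φ.toEquiv
  map_rel_iff' {x y} := by
    simp only [circulantGraph_adj, AddEquiv.toEquiv_eq_coe, EquivLike.coe_coe, ← map_sub,
      φ.injective.mem_set_image, φ.injective.ne_iff]

theorem circulantGraph_insert_neg (x : G) (s : Set G) :
    circulantGraph (insert (-x) s) = circulantGraph (insert x s) := by
  have sub_eq_neg_iff (p q : G) : p - q = -x ↔ q - p = x := by rw [← neg_sub, neg_inj]
  ext u v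
  simp only [circulantGraph_adj, Set.mem_insert_iff, sub_eq_neg_iff]
  tauto

end SimpleGraph

theorem Nat.coprime_of_eq_add_mul {n a b k : ℕ} (hn : n = a + k * b)
    (hgcd : Nat.gcd (Nat.gcd n a) b = 1) : Nat.Coprime b n := by
  have hdvd_a : Nat.gcd n b ∣ a :=
    (Nat.dvd_add_left ((Nat.gcd_dvd_right n b).mul_left k)).mp (hn ▸ Nat.gcd_dvd_left n b)
  rw [Nat.coprime_comm, Nat.Coprime, ← Nat.dvd_one, ← hgcd]
  exact Nat.dvd_gcd (Nat.dvd_gcd (Nat.gcd_dvd_left n b) hdvd_a) (Nat.gcd_dvd_right n b)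

theorem stmt_9_general (n a b : ℕ)
    (hn : n = a + 2 * b) (hgcd : Nat.gcd (Nat.gcd n a) b = 1) :
    Nonempty (circ n {a, b} ≃g circ n {1, 2}) := by
  have hcop : Nat.Coprime b n := Nat.coprime_of_eq_add_mul hn hgcd
  set v := (ZMod.unitOfCoprime b hcop)⁻¹
  have hvb : (v : ZMod n) * b = 1 := by
    rw [← ZMod.coe_unitOfCoprime b hcop]
    exact Units.inv_mul _
  have ha : (a : ZMod n) = -2 * b := by
    have h := congrArg (Nat.cast : ℕ → ZMod n) hn
    push_cast [ZMod.natCast_self] at h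
    linear_combination -h
  have himage : DistribMulAction.toAddEquiv (ZMod n) v '' {(a : ZMod n), (b : ZMod n)} =
      {-2, 1} := by
    simp only [Set.image_pair, DistribMulAction.toAddEquiv_apply, Units.smul_def, smul_eq_mul]
    rw [ha, show (v : ZMod n) * (-2 * b) = -2 * (v * b) by ring, hvb, mul_one]
  have hcirc : circ n {1, 2} = circulantGraph {-2, 1} := by
    rw [circ, Set.image_pair, circulantGraph_insert_neg, Set.pair_comm]
    norm_num
  rw [hcirc, ← himage, circ, Set.image_pair]
  exact ⟨Iso.circulantGraphOfAddEquiv _ _⟩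

theorem stmt_9 (n a b : ℕ) (ha : 1 ≤ a) (hab : a < b) (hb : 2 * b < n)
    (hn : n = a + 2 * b) (hgcd : Nat.gcd (Nat.gcd n a) b = 1) :
    Nonempty (circ n {a, b} ≃g circ n {1, 2}) :=
  stmt_9_general n a b hn hgcd
end

section
/- For n ≥ 3 and a with 2n/gcd(a,2n) = 3 and 1 ≤ a < n, the circulant graph C_{2n}(a,n) is isomorphic to a disjoint union of gcd(a,2n)/2 copies of the complement of the 6-cycle. -/
open SimpleGraph

/-!
Write `2n = 3d` with `d = gcd(a, 2n)`. Since `d ∣ a < n < 2d`, we get `a = d`, so `a = 2m` and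
`n = 3m`. Numbering the vertices of `ℤ/6mℤ` as `r + m s` with `r < m` and `s ∈ ℤ/6ℤ`, the jumps
`2m, 3m` never change `r` and act on `s` as the jumps `2, 3`: each residue class mod `m` spans a
copy of `C_6(2, 3)`.
-/

lemma add_mul_eq_add_mul_iff_of_lt {m r r' x y : ℕ} (hr : r < m) (hr' : r' < m) :
    r + m * x = r' + m * y ↔ r = r' ∧ x = y := by
  refine ⟨fun h => ?_, fun ⟨hr, hx⟩ => hr ▸ hx ▸ rfl⟩
  have hm : 0 < m := by omega
  have hmod := congrArg (· % m) h
  have hdiv := congrArg (· / m) h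
  simp only [Nat.add_mul_mod_self_left, Nat.add_mul_div_left _ _ hm, Nat.mod_eq_of_lt hr,
    Nat.mod_eq_of_lt hr', Nat.div_eq_of_lt hr, Nat.div_eq_of_lt hr', zero_add] at hmod hdiv
  exact ⟨hmod, hdiv⟩

section MixedRadix

variable {m k : ℕ}

def mixedRadix (m k : ℕ) (p : Fin m × ZMod k) : ZMod (m * k) :=
  ((p.1 + m * p.2.val : ℕ) : ZMod (m * k))

lemma natCast_add_mul_eq_natCast_add_mul_iff (r r' : Fin m) (x y : ℕ) :
    ((r + m * x : ℕ) : ZMod (m * k)) = ((r' + m * y : ℕ) : ZMod (m * k)) ↔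
      r = r' ∧ (x : ZMod k) = y := by
  rw [ZMod.natCast_eq_natCast_iff' _ _ (m * k), ZMod.natCast_eq_natCast_iff' _ _ k, Nat.mod_mul,
    Nat.mod_mul, Nat.add_mul_mod_self_left, Nat.add_mul_mod_self_left,
    Nat.add_mul_div_left _ _ r.pos, Nat.add_mul_div_left _ _ r.pos, Nat.div_eq_of_lt r.isLt,
    Nat.div_eq_of_lt r'.isLt, Nat.mod_eq_of_lt r.isLt, Nat.mod_eq_of_lt r'.isLt, zero_add,
    zero_add, add_mul_eq_add_mul_iff_of_lt r.isLt r'.isLt, Fin.val_inj]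

variable [NeZero k]

lemma mixedRadix_eq_add_iff (p q : Fin m × ZMod k) (c : ℕ) :
    mixedRadix m k p = mixedRadix m k q + ((m * c : ℕ) : ZMod (m * k)) ↔
      p.1 = q.1 ∧ p.2 = q.2 + c := by
  rw [mixedRadix, mixedRadix, ← Nat.cast_add, add_assoc, ← mul_add,
    natCast_add_mul_eq_natCast_add_mul_iff]
  push_cast
  simp only [ZMod.natCast_zmod_val]

lemma mixedRadix_injective : Function.Injective (mixedRadix m k) := fun p q h => by
  rw [← add_zero (mixedRadix m k q), ← Nat.cast_zero, ← mul_zero m, mixedRadix_eq_add_iff] at h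
  simpa [Prod.ext_iff] using h

lemma mixedRadix_bijective [NeZero m] : Function.Bijective (mixedRadix m k) := by
  rw [Fintype.bijective_iff_injective_and_card]
  exact ⟨mixedRadix_injective, by simp [ZMod.card]⟩

lemma mixedRadix_sub_mem_iff (S : Set ℕ) (p q : Fin m × ZMod k) :
    mixedRadix m k p - mixedRadix m k q ∈ ((↑) '' ((m * ·) '' S) : Set (ZMod (m * k))) ↔
      p.1 = q.1 ∧ p.2 - q.2 ∈ ((↑) '' S : Set (ZMod k)) := by
  simp only [Set.image_image, Set.mem_image, eq_sub_iff_add_eq', eq_comm (b := mixedRadix m k p),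
    mixedRadix_eq_add_iff, eq_comm (a := p.2), ← exists_and_left, and_left_comm (b := p.1 = q.1)]

noncomputable def circMulIsoCopies [NeZero m] (S : Set ℕ) :
    circ (m * k) ((m * ·) '' S) ≃g copies m (circ k S) :=
  RelIso.symm
    { toEquiv := Equiv.ofBijective _ mixedRadix_bijective
      map_rel_iff' := fun {p q} => by
        simp only [Equiv.ofBijective_apply, circ, circulantGraph_adj, copies,
          mixedRadix_sub_mem_iff, mixedRadix_injective.ne_iff, ne_eq, Prod.ext_iff,
          eq_comm (a := q.1)]
        tauto }

end MixedRadix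

theorem stmt_19_general (n a : ℕ) (han : a < n)
    (h : 2 * n / Nat.gcd a (2 * n) = 3) :
    Nonempty (circ (2 * n) {a, n} ≃g
      copies (Nat.gcd a (2 * n) / 2) (circ 6 {2, 3})) := by
  have h2n : 2 * n = 3 * Nat.gcd a (2 * n) := by
    rw [← h, Nat.div_mul_cancel (Nat.gcd_dvd_right _ _)]
  have ha : a ≠ 0 := by
    rintro rfl
    rw [Nat.gcd_zero_left] at h2n
    omega
  have had : Nat.gcd a (2 * n) = a :=
    (Nat.eq_of_dvd_of_lt_two_mul ha (Nat.gcd_dvd_left _ _) (by omega)).symm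
  rw [had] at h2n ⊢
  obtain ⟨m, rfl, rfl⟩ : ∃ m, a = 2 * m ∧ n = 3 * m := ⟨a / 2, by omega, by omega⟩
  have : NeZero m := ⟨by omega⟩
  rw [show 2 * (3 * m) = m * 6 by ring, show 2 * m / 2 = m by omega,
    show ({2 * m, 3 * m} : Set ℕ) = (m * ·) '' {2, 3} by simp [Set.image_pair, mul_comm]]
  exact ⟨circMulIsoCopies {2, 3}⟩

theorem stmt_19 (n a : ℕ) (hn : 3 ≤ n) (ha : 1 ≤ a) (han : a < n)
    (h : 2 * n / Nat.gcd a (2 * n) = 3) :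
    Nonempty (circ (2 * n) {a, n} ≃g
      copies (Nat.gcd a (2 * n) / 2) (circ 6 {2, 3})) :=
  stmt_19_general n a han h
end
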